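/- Let (Xₙ, hₙ) be an inverse sequence of compact metric spaces and suppose each bonding map hₙ : Xₙ₊₁ → Xₙ is a near-homeomorphism, i.e., a uniform limit of homeomorphisms. If each Xₙ is homeomorphic to the circle S¹, then the inverse limit lim← (Xₙ, hₙ) is homeomorphic to S¹. -/

import Mathlib

/-!
Brown's argument. Replace each bonding map `hₙ` by a homeomorphism `φₙ` so close to it that the
maps `y ↦ (φ₀ ∘ ⋯ ∘ φₙ₋₁) (yₙ)` from the inverse limit to `X₀` move by less than a radius `rₙ`
at each step, with `rₙ₊₁ ≤ rₙ / 2`; they converge uniformly to a continuous `F` within `2 rₙ`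
of the `n`-th map. Every point of `Xₙ` lies on a thread, so `F` has dense, hence full, range.
Choosing `rₙ` small for the uniform continuity of `(φ₀ ∘ ⋯ ∘ φₙ₋₁)⁻¹`, and that in turn for the
uniform continuity of the compositions of bonding maps down from level `n`, forces two threads
with the same image to agree at every level. A continuous bijection from a compact space is a
homeomorphism, and `X₀` is the circle.
-/

open Filter Topology

section Geometric

lemma le_div_two_pow_of_le_half {d : ℕ → ℝ} (hd : ∀ n, d (n + 1) ≤ d n / 2) (n m : ℕ) :
    d (n + m) ≤ d n / 2 ^ m := by
  induction m with
  | zero => simp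
  | succ m ih =>
    calc d (n + (m + 1)) ≤ d (n + m) / 2 := hd (n + m)
      _ ≤ d n / 2 ^ m / 2 := by gcongr
      _ = d n / 2 ^ (m + 1) := by rw [pow_succ, div_div]

variable {E : Type*} [PseudoMetricSpace E] {u : ℕ → E} {d : ℕ → ℝ}

lemma cauchySeq_of_dist_succ_le_of_le_half (hd : ∀ n, d (n + 1) ≤ d n / 2)
    (hu : ∀ n, dist (u n) (u (n + 1)) ≤ d n) : CauchySeq u :=
  cauchySeq_of_le_geometric_two (C := 2 * d 0) fun n =>
    (hu n).trans <| by simpa using le_div_two_pow_of_le_half hd 0 n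

lemma dist_le_two_mul_of_dist_succ_le_of_le_half (hd : ∀ n, d (n + 1) ≤ d n / 2)
    (hu : ∀ n, dist (u n) (u (n + 1)) ≤ d n) {a : E} (ha : Tendsto u atTop (𝓝 a)) (n : ℕ) :
    dist (u n) a ≤ 2 * d n :=
  dist_le_of_le_geometric_two_of_tendsto₀ (f := fun m => u (n + m))
    (fun m => (hu (n + m)).trans <| by simpa using le_div_two_pow_of_le_half hd n m)
    (ha.comp ((tendsto_add_atTop_nat n).congr fun m => add_comm m n))

lemma tendsto_zero_of_le_half (hd : ∀ n, d (n + 1) ≤ d n / 2) (hpos : ∀ n, 0 < d n) :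
    Tendsto d atTop (𝓝 0) :=
  squeeze_zero (fun n => (hpos n).le) (fun n => by simpa using le_div_two_pow_of_le_half hd 0 n)
    (by simpa [div_eq_mul_inv] using
      (tendsto_pow_atTop_nhds_zero_of_lt_one (by norm_num) one_half_lt_one).const_mul (d 0))

end Geometric

lemma DenseRange.surjective_of_compactSpace {Y Z : Type*} [TopologicalSpace Y] [CompactSpace Y]
    [TopologicalSpace Z] [T2Space Z] {f : Y → Z} (hf : DenseRange f) (hcont : Continuous f) :
    Function.Surjective f := by
  rw [← Set.range_eq_univ, ← hf.closure_range, (isCompact_range hcont).isClosed.closure_eq]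

def IsNearHomeomorph {Y Z : Type*} [TopologicalSpace Y] [PseudoMetricSpace Z] (f : Y → Z) : Prop :=
  ∀ ε > 0, ∃ φ : Y ≃ₜ Z, ∀ y, dist (f y) (φ y) < ε

lemma IsNearHomeomorph.surjective {Y Z : Type*} [TopologicalSpace Y] [CompactSpace Y]
    [MetricSpace Z] {f : Y → Z} (hf : IsNearHomeomorph f) (hcont : Continuous f) :
    Function.Surjective f :=
  DenseRange.surjective_of_compactSpace (hcont := hcont) <| Metric.denseRange_iff.2 fun z ε hε => by
    obtain ⟨φ, hφ⟩ := hf ε hε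
    exact ⟨φ.symm z, by simpa [dist_comm] using hφ (φ.symm z)⟩

section InverseLimit

variable {X : ℕ → Type*}

def inverseLimit (h : ∀ n, X (n + 1) → X n) : Set (∀ n, X n) := {x | ∀ n, h n (x (n + 1)) = x n}

lemma exists_mem_inverseLimit_apply_eq {h : ∀ n, X (n + 1) → X n}
    (hs : ∀ n, Function.Surjective (h n)) (j : ℕ) (a : X j) :
    ∃ x ∈ inverseLimit h, x j = a := by
  induction j generalizing X with
  | zero =>
    choose lift hlift using hs
    exact ⟨fun n => Nat.rec (motive := X) a (fun k u => lift k u) n, fun n => hlift n _, rfl⟩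
  | succ j ih =>
    -- a thread of the shifted system `X (· + 1)` extends one step down
    obtain ⟨x, hx, rfl⟩ :=
      ih (X := fun n => X (n + 1)) (h := fun n => h (n + 1)) (fun n => hs (n + 1)) a
    refine ⟨fun | 0 => h 0 (x 0) | n + 1 => x n, fun n => ?_, rfl⟩
    cases n with
    | zero => rfl
    | succ n => exact hx n

variable [∀ n, TopologicalSpace (X n)] [∀ n, T2Space (X n)] {h : ∀ n, X (n + 1) → X n}

lemma isClosed_inverseLimit (hc : ∀ n, Continuous (h n)) : IsClosed (inverseLimit h) := by
  simp only [inverseLimit, Set.ofPred_forall]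
  exact isClosed_iInter fun n => isClosed_eq ((hc n).comp (continuous_apply _)) (continuous_apply n)

lemma compactSpace_inverseLimit [∀ n, CompactSpace (X n)] (hc : ∀ n, Continuous (h n)) :
    CompactSpace (inverseLimit h) :=
  isCompact_iff_compactSpace.mp (isClosed_inverseLimit hc).isCompact

end InverseLimit

lemma exists_pos_forall_mem_inverseLimit_dist_lt {X : ℕ → Type*} [∀ n, PseudoMetricSpace (X n)]
    {h : ∀ n, X (n + 1) → X n} (hc : ∀ n, UniformContinuous (h n)) (N : ℕ) {ε : ℝ} (hε : 0 < ε) :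
    ∃ δ > 0, ∀ x ∈ inverseLimit h, ∀ y ∈ inverseLimit h,
      dist (x N) (y N) < δ → ∀ m ≤ N, dist (x m) (y m) < ε := by
  induction N with
  | zero => exact ⟨ε, hε, fun x _ y _ hxy m hm => by rwa [Nat.le_zero.1 hm]⟩
  | succ N ih =>
    obtain ⟨δ, hδ, hδN⟩ := ih
    obtain ⟨η, hη, hηN⟩ := Metric.uniformContinuous_iff.1 (hc N) δ hδ
    refine ⟨min ε η, by positivity, fun x hx y hy hxy m hm => ?_⟩
    rcases Nat.of_le_succ hm with hm | rfl
    · refine hδN x hx y hy ?_ m hm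
      rw [← hx N, ← hy N]
      exact hηN (hxy.trans_le (min_le_right _ _))
    · exact hxy.trans_le (min_le_left _ _)

section Brown

variable {X : ℕ → Type*} [∀ n, MetricSpace (X n)]

-- `4 * radius` because two threads with the same limit point are each within `2 * radius` of it
structure ApproxStage (X : ℕ → Type*) [∀ n, MetricSpace (X n)] (α : ℕ → ℝ) (n : ℕ) where
  hom : X n ≃ₜ X 0
  radius : ℝ
  radius_pos : 0 < radius
  dist_symm_lt : ∀ a b, dist a b ≤ 4 * radius → dist (hom.symm a) (hom.symm b) < α n

variable {α : ℕ → ℝ}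

lemma ApproxStage.exists_hom_eq [CompactSpace (X 0)] {n : ℕ} (hα : 0 < α n) (H : X n ≃ₜ X 0)
    {c : ℝ} (hc : 0 < c) : ∃ s : ApproxStage X α n, s.hom = H ∧ s.radius ≤ c := by
  obtain ⟨δ, hδ, hHδ⟩ := Metric.uniformContinuous_iff.1
    (CompactSpace.uniformContinuous_of_continuous H.symm.continuous) _ hα
  refine ⟨⟨H, min c (δ / 8), by positivity, fun a b hab => hHδ ?_⟩, rfl, min_le_left _ _⟩
  linarith [min_le_right c (δ / 8)]

lemma ApproxStage.exists_succ [∀ n, CompactSpace (X n)] {h : ∀ n, X (n + 1) → X n} {n : ℕ}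
    (hnear : IsNearHomeomorph (h n)) (hα : 0 < α (n + 1)) (s : ApproxStage X α n) :
    ∃ t : ApproxStage X α (n + 1),
      t.radius ≤ s.radius / 2 ∧ ∀ x, dist (s.hom (h n x)) (t.hom x) < s.radius := by
  obtain ⟨ε, hε, hsε⟩ := Metric.uniformContinuous_iff.1
    (CompactSpace.uniformContinuous_of_continuous s.hom.continuous) _ s.radius_pos
  obtain ⟨φ, hφ⟩ := hnear ε hε
  obtain ⟨t, hth, ht⟩ := exists_hom_eq hα (φ.trans s.hom) (half_pos s.radius_pos)
  exact ⟨t, ht, fun x => by simpa only [hth, Homeomorph.trans_apply] using hsε (hφ x)⟩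

lemma exists_approxStage_seq [∀ n, CompactSpace (X n)] {h : ∀ n, X (n + 1) → X n}
    (hnear : ∀ n, IsNearHomeomorph (h n)) (hα : ∀ n, 0 < α n) :
    ∃ s : ∀ n, ApproxStage X α n, ∀ n, (s (n + 1)).radius ≤ (s n).radius / 2 ∧
      ∀ x, dist ((s n).hom (h n x)) ((s (n + 1)).hom x) < (s n).radius := by
  choose next hnext using fun n (s : ApproxStage X α n) => s.exists_succ (hnear n) (hα (n + 1))
  obtain ⟨s₀, -⟩ := ApproxStage.exists_hom_eq (hα 0) (Homeomorph.refl (X 0)) one_pos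
  exact ⟨fun n => Nat.rec s₀ next n, fun n => hnext n _⟩

variable {h : ∀ n, X (n + 1) → X n}

lemma exists_limit_of_approxStage [CompactSpace (X 0)] [CompactSpace (inverseLimit h)]
    (s : ∀ n, ApproxStage X α n)
    (hs : ∀ n, (s (n + 1)).radius ≤ (s n).radius / 2 ∧
      ∀ x, dist ((s n).hom (h n x)) ((s (n + 1)).hom x) < (s n).radius) :
    ∃ F : C(inverseLimit h, X 0), ∀ n (y : inverseLimit h),
      dist (F y) ((s n).hom (y.1 n)) ≤ 2 * (s n).radius := by
  let approx (n : ℕ) : C(inverseLimit h, X 0) :=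
    ⟨fun y => (s n).hom (y.1 n),
      (s n).hom.continuous.comp ((continuous_apply n).comp continuous_subtype_val)⟩
  have hstep n : dist (approx n) (approx (n + 1)) ≤ (s n).radius :=
    (ContinuousMap.dist_le (s n).radius_pos.le).2 fun y => by
      simpa only [approx, ContinuousMap.coe_mk, ← y.2 n] using ((hs n).2 (y.1 (n + 1))).le
  have hrad n := (hs n).1
  obtain ⟨F, hF⟩ := cauchySeq_tendsto_of_complete
    (cauchySeq_of_dist_succ_le_of_le_half hrad hstep)
  refine ⟨F, fun n y => ?_⟩
  rw [dist_comm]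
  exact (ContinuousMap.dist_apply_le_dist y).trans
    (dist_le_two_mul_of_dist_succ_le_of_le_half hrad hstep hF n)

lemma injective_of_approxStage
    (hα : ∀ N, ∀ x ∈ inverseLimit h, ∀ y ∈ inverseLimit h,
      dist (x N) (y N) < α N → ∀ m ≤ N, dist (x m) (y m) < (1 / 2) ^ N)
    (s : ∀ n, ApproxStage X α n) {F : inverseLimit h → X 0}
    (hF : ∀ n y, dist (F y) ((s n).hom (y.1 n)) ≤ 2 * (s n).radius) : Function.Injective F := by
  intro y z hyz
  have hclose N : dist (y.1 N) (z.1 N) < α N := by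
    have hN : dist ((s N).hom (y.1 N)) ((s N).hom (z.1 N)) ≤ 4 * (s N).radius := by
      calc _ ≤ dist ((s N).hom (y.1 N)) (F y) + dist (F z) ((s N).hom (z.1 N)) :=
            hyz ▸ dist_triangle _ _ _
        _ ≤ 4 * (s N).radius := by linarith [hF N y, hF N z, dist_comm (F y) ((s N).hom (y.1 N))]
    simpa using (s N).dist_symm_lt _ _ hN
  refine Subtype.ext (funext fun m => dist_le_zero.1 ?_)
  refine ge_of_tendsto (tendsto_pow_atTop_nhds_zero_of_lt_one (by norm_num) one_half_lt_one) ?_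
  filter_upwards [eventually_ge_atTop m] with N hN
  exact (hα N y.1 y.2 z.1 z.2 (hclose N) m hN).le

lemma surjective_of_approxStage [CompactSpace (inverseLimit h)]
    (hsurj : ∀ n, Function.Surjective (h n))
    (s : ∀ n, ApproxStage X α n) (hrad : Tendsto (fun n => (s n).radius) atTop (𝓝 0))
    (F : C(inverseLimit h, X 0))
    (hF : ∀ n y, dist (F y) ((s n).hom (y.1 n)) ≤ 2 * (s n).radius) : Function.Surjective F :=
  DenseRange.surjective_of_compactSpace (hcont := F.continuous) <|
  Metric.denseRange_iff.2 fun c ε hε => by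
    obtain ⟨N, hN⟩ := ((hrad.const_mul 2).eventually_lt_const (by simpa using hε)).exists
    obtain ⟨x, hx, hxN⟩ := exists_mem_inverseLimit_apply_eq hsurj N ((s N).hom.symm c)
    refine ⟨⟨x, hx⟩, ?_⟩
    have := hF N ⟨x, hx⟩
    simp only [hxN, Homeomorph.apply_symm_apply] at this
    rw [dist_comm]
    exact this.trans_lt hN

theorem nonempty_homeomorph_inverseLimit [∀ n, CompactSpace (X n)] (hc : ∀ n, Continuous (h n))
    (hnear : ∀ n, IsNearHomeomorph (h n)) : Nonempty (inverseLimit h ≃ₜ X 0) := by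
  have := compactSpace_inverseLimit hc
  choose α hαpos hα using fun N => exists_pos_forall_mem_inverseLimit_dist_lt
    (fun n => CompactSpace.uniformContinuous_of_continuous (hc n)) N (pow_pos one_half_pos N)
  obtain ⟨s, hs⟩ := exists_approxStage_seq hnear hαpos
  obtain ⟨F, hF⟩ := exists_limit_of_approxStage s hs
  have hrad := tendsto_zero_of_le_half (fun n => (hs n).1) fun n => (s n).radius_pos
  exact ⟨(isHomeomorph_iff_continuous_bijective.2 ⟨F.continuous, injective_of_approxStage hα s hF,
    surjective_of_approxStage (fun n => (hnear n).surjective (hc n)) s hrad F hF⟩).homeomorph⟩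

end Brown

theorem stmt13 (X : ℕ → Type) [∀ n, MetricSpace (X n)] [∀ n, CompactSpace (X n)]
    (h : ∀ n, X (n+1) → X n) (hc : ∀ n, Continuous (h n))
    (hnear : ∀ n, ∀ ε > 0, ∃ φ : X (n+1) ≃ₜ X n, ∀ x, dist (h n x) (φ x) < ε)
    (hcirc : ∀ n, Nonempty (X n ≃ₜ Metric.sphere (0:ℂ) 1)) :
    Nonempty ({x : ∀ n, X n // ∀ n, h n (x (n+1)) = x n} ≃ₜ Metric.sphere (0:ℂ) 1) :=
  ⟨(nonempty_homeomorph_inverseLimit hc hnear).some.trans (hcirc 0).some⟩
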